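/- In every stochastic reachability game with partial observation on both sides, every initial distribution δ ∈ Δ(K) is either almost-surely winning for player 1 or positively winning for player 2, and not both. -/

import Mathlib

open scoped Classical

noncomputable section

/-- A probability distribution on a finite type, given by a nonnegative
real-valued density summing to `1`. -/
structure FDist (X : Type*) [Fintype X] where
  f : X → ℝ
  nonneg : ∀ x, 0 ≤ f x
  sum_one : ∑ x, f x = 1

/-- The support of a distribution: the set of points with positive probability. -/
def FDist.support {X : Type*} [Fintype X] (δ : FDist X) : Finset X :=
  Finset.univ.filter fun x => 0 < δ.f x

/-- The uniform distribution on a nonempty finite set. -/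
def uniform {X : Type*} [Fintype X] (L : Finset X) (hL : L.Nonempty) : FDist X where
  f x := if x ∈ L then (L.card : ℝ)⁻¹ else 0
  nonneg x := by split_ifs <;> positivity
  sum_one := by
    rw [Finset.sum_ite_mem, Finset.univ_inter, Finset.sum_const, nsmul_eq_mul,
      mul_inv_cancel₀]
    exact_mod_cast (Finset.card_pos.mpr hL).ne'

/-- Uniform distribution on `L`, defaulting to the uniform distribution on the
whole type when `L` is empty. -/
def uniformD {X : Type*} [Fintype X] [Nonempty X] (L : Finset X) : FDist X :=
  if h : L.Nonempty then uniform L h else uniform Finset.univ Finset.univ_nonempty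

/-- The Dirac distribution on a point. -/
def dirac {X : Type*} [Fintype X] (x : X) : FDist X where
  f y := if y = x then 1 else 0
  nonneg y := by by_cases h : y = x <;> simp [h]
  sum_one := by simp

/-- A stochastic game with partial observation on both sides and a reachability
objective for player 1: states `K`, actions `I`, `J`, signals `C`, `D`, target
states `T`, transition probabilities `p`, and actions encoded in signals via
`act₁`, `act₂`. -/
structure Game (K I J C D : Type*) [Fintype K] [Fintype I] [Fintype J] [Fintype C] [Fintype D] where
  T : Finset K
  p : K → I → J → C × D × K → ℝ
  p_nonneg : ∀ k i j x, 0 ≤ p k i j x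
  p_sum : ∀ k i j, ∑ x : C × D × K, p k i j x = 1
  act₁ : C → I
  act₂ : D → J
  act_compat : ∀ k i j c d l, 0 < p k i j (c, d, l) → i = act₁ c ∧ j = act₂ d

/-- A (behavioral) strategy of player 1: a distribution on actions for each
finite sequence of received signals. -/
abbrev Strategy1 (I C : Type*) [Fintype I] : Type _ := List C → FDist I

/-- A (behavioral) strategy of player 2. -/
abbrev Strategy2 (J D : Type*) [Fintype J] : Type _ := List D → FDist J

/-- A play with `n+1` states: the initial state followed by `n` steps, each
consisting of a signal for player 1, a signal for player 2 and the next state. -/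
structure Hist (K C D : Type*) (n : ℕ) where
  first : K
  steps : Fin n → C × D × K

instance (K C D : Type*) [Fintype K] [Fintype C] [Fintype D] (n : ℕ) :
    Fintype (Hist K C D n) :=
  Fintype.ofEquiv (K × (Fin n → C × D × K))
    { toFun := fun x => ⟨x.1, x.2⟩
      invFun := fun h => (h.first, h.steps)
      left_inv := fun _ => rfl
      right_inv := fun _ => rfl }

namespace Hist

variable {K C D : Type*}

/-- The last state of a play. -/
def last : ∀ {n : ℕ}, Hist K C D n → K
  | 0, h => h.first
  | n + 1, h => (h.steps (Fin.last n)).2.2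

/-- The play obtained by removing the last step. -/
def init {n : ℕ} (h : Hist K C D (n + 1)) : Hist K C D n :=
  ⟨h.first, fun m => h.steps m.castSucc⟩

/-- The `m`-th state of a play, `0`-indexed: `state h 0` is the initial state
(called `k₁` in `1`-indexed notation). -/
def state {n : ℕ} (h : Hist K C D n) (m : Fin (n + 1)) : K :=
  if hm : m.val = 0 then h.first
  else (h.steps ⟨m.val - 1, by have := m.isLt; omega⟩).2.2

/-- The sequence of signals received by player 1 along the play. -/
def sig1 {n : ℕ} (h : Hist K C D n) : List C := List.ofFn fun m => (h.steps m).1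

/-- The sequence of signals received by player 2 along the play. -/
def sig2 {n : ℕ} (h : Hist K C D n) : List D := List.ofFn fun m => (h.steps m).2.1

/-- The play visits the target set `T`. -/
def visits (T : Finset K) {n : ℕ} (h : Hist K C D n) : Prop :=
  ∃ m : Fin (n + 1), h.state m ∈ T

end Hist

namespace Game

variable {K I J C D : Type*} [Fintype K] [Fintype I] [Fintype J] [Fintype C] [Fintype D]

/-- The probability of a given play of `n` steps, under initial distribution `δ`
and strategies `σ`, `τ`. -/
def playProb (G : Game K I J C D) (δ : FDist K) (σ : Strategy1 I C) (τ : Strategy2 J D) :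
    ∀ n : ℕ, Hist K C D n → ℝ
  | 0, h => δ.f h.first
  | n + 1, h =>
      G.playProb δ σ τ n h.init *
        ∑ i : I, ∑ j : J,
          (σ h.init.sig1).f i * (τ h.init.sig2).f j *
            G.p h.init.last i j (h.steps (Fin.last n))

/-- The probability that a play with `n+1` states visits the target set. -/
def reachProb (G : Game K I J C D) (δ : FDist K) (σ : Strategy1 I C)
    (τ : Strategy2 J D) (n : ℕ) : ℝ :=
  ∑ h : Hist K C D n, if h.visits G.T then G.playProb δ σ τ n h else 0

/-- The reachability probability `γ₁(δ,σ,τ)`: the supremum over horizons of the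
probability that the play visits the target set. -/
def val (G : Game K I J C D) (δ : FDist K) (σ : Strategy1 I C) (τ : Strategy2 J D) : ℝ :=
  ⨆ n : ℕ, G.reachProb δ σ τ n

/-- `δ` is almost-surely winning for player 1. -/
def AlmostSureWin1 (G : Game K I J C D) (δ : FDist K) : Prop :=
  ∃ σ, ∀ τ, G.val δ σ τ = 1

/-- `δ` is positively winning for player 1. -/
def PositiveWin1 (G : Game K I J C D) (δ : FDist K) : Prop :=
  ∃ σ, ∀ τ, 0 < G.val δ σ τ

/-- `δ` is positively winning for player 2. -/
def PositiveWin2 (G : Game K I J C D) (δ : FDist K) : Prop :=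
  ∃ τ, ∀ σ, G.val δ σ τ < 1

/-- `δ` is surely (equivalently here, almost-surely) winning for player 2. -/
def SureWin2 (G : Game K I J C D) (δ : FDist K) : Prop :=
  ∃ τ, ∀ σ, G.val δ σ τ = 0

/-- One-step belief operator of player 1. -/
def B1 (G : Game K I J C D) (L : Finset K) (c : C) : Finset K :=
  Finset.univ.filter fun k => ∃ l ∈ L, ∃ d : D, 0 < G.p l (G.act₁ c) (G.act₂ d) (c, d, k)

/-- One-step belief operator of player 2. -/
def B2 (G : Game K I J C D) (L : Finset K) (d : D) : Finset K :=
  Finset.univ.filter fun k => ∃ l ∈ L, ∃ c : C, 0 < G.p l (G.act₁ c) (G.act₂ d) (c, d, k)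

/-- Belief of player 1 after a sequence of signals. -/
def B1seq (G : Game K I J C D) (L : Finset K) (cs : List C) : Finset K := cs.foldl G.B1 L

/-- Belief of player 2 after a sequence of signals. -/
def B2seq (G : Game K I J C D) (L : Finset K) (ds : List D) : Finset K := ds.foldl G.B2 L

/-- One-step pessimistic belief operator of player 1. -/
def B1p (G : Game K I J C D) (L : Finset K) (c : C) : Finset K := G.B1 (L \ G.T) c

/-- One-step pessimistic belief operator of player 2. -/
def B2p (G : Game K I J C D) (L : Finset K) (d : D) : Finset K := G.B2 (L \ G.T) d

/-- Pessimistic belief of player 1 after a sequence of signals. -/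
def B1pseq (G : Game K I J C D) (L : Finset K) (cs : List C) : Finset K := cs.foldl G.B1p L

/-- Pessimistic belief of player 2 after a sequence of signals. -/
def B2pseq (G : Game K I J C D) (L : Finset K) (ds : List D) : Finset K := ds.foldl G.B2p L

/-- The operator `Φ` on collections of subsets of `K ∖ T`. -/
def Phi (G : Game K I J C D) (𝓛 : Set (Finset K)) : Set (Finset K) :=
  {L | L ∈ 𝓛 ∧ L ∩ G.T = ∅ ∧ ∃ j : J, ∀ d : D, G.act₂ d = j → G.B2 L d ∈ 𝓛}

theorem Phi_mono (G : Game K I J C D) : Monotone G.Phi := by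
  intro A B hAB L hL
  obtain ⟨h1, h2, j, hj⟩ := hL
  exact ⟨hAB h1, h2, j, fun d hd => hAB (hj d hd)⟩

/-- `𝓛_∞`, the greatest fixpoint of `Φ`. -/
def Linf (G : Game K I J C D) : Set (Finset K) :=
  OrderHom.gfp ⟨G.Phi, G.Phi_mono⟩

/-- The winning condition of the `𝓛`-game for player 1, on a play with initial
support `L`: some state `k_m` is a target state and all earlier pessimistic
beliefs of player 1 avoid `𝓛`. -/
def LWin (G : Game K I J C D) (𝓛 : Set (Finset K)) (L : Finset K) {n : ℕ}
    (h : Hist K C D n) : Prop :=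
  ∃ m : Fin (n + 1), h.state m ∈ G.T ∧
    ∀ r : ℕ, 1 ≤ r → r ≤ m.val → G.B1pseq L (h.sig1.take r) ∉ 𝓛

/-- The payoff `γ₁^𝓛(δ,σ,τ)` of player 1 in the `𝓛`-game, for an initial
distribution `δ` with support `L`. -/
def Lval (G : Game K I J C D) (𝓛 : Set (Finset K)) (L : Finset K) (δ : FDist K)
    (σ : Strategy1 I C) (τ : Strategy2 J D) : ℝ :=
  ⨆ n : ℕ, ∑ h : Hist K C D n, if G.LWin 𝓛 L h then G.playProb δ σ τ n h else 0

end Game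

/-- The uniformly random strategy `σ_R` of player 1. -/
def randomStrat (I C : Type*) [Fintype I] [Nonempty I] : Strategy1 I C :=
  fun _ => uniform Finset.univ Finset.univ_nonempty
variable {K I J C D : Type*} [Fintype K] [Fintype I] [Fintype J] [Fintype C] [Fintype D]
  [Nonempty K] [Nonempty I] [Nonempty J] [Nonempty C] [Nonempty D]

/-!
Call a family `𝒲` of pessimistic beliefs of player 1, each `L` with a nonempty set `𝔄 L` of
actions, valid if it is closed under the belief updates of these actions and if, from any
`L ∈ 𝒲` and `k ∈ L`, no support pattern of player 2 (an action set for each sequence of his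
signals) is surely safe against player 1 playing uniformly on `𝔄` of his current belief. The
union of all valid families is valid, and `δ` is won almost surely by player 1 exactly when its
support lies in it.

If it does, compactness of the space of patterns gives a horizon `N` by which every pattern is
beaten with positive probability. Against any `τ`, the pattern of the actions that `τ` plays with
probability at least `1 / card J` is beaten, hence so is `τ`, with probability at least some
`ε > 0`; so each round of `N` steps reaches the target with probability at least `ε`.

If it does not, then for every `σ` the beliefs that `σ` reaches, with the actions `σ` plays at
them, form a closed family that is not valid: player 2 has a surely safe pattern from some
reachable belief `L` and state `k ∈ L`. Player 2 guesses when `L` is reached and which `(𝔄, L, k)`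
applies, plays every action until then and the safe pattern afterwards. There are countably many
guesses, and by Kuhn's theorem their mixture is a behavioral strategy, which keeps the play away
from the target with positive probability against every `σ`.
-/

section Distributions

variable {X : Type*} [Fintype X]

lemma FDist.exists_pos (δ : FDist X) : ∃ x, 0 < δ.f x := by
  by_contra! h
  have := Finset.sum_nonpos fun x (_ : x ∈ Finset.univ) => h x
  rw [δ.sum_one] at this
  exact absurd this one_pos.not_ge

lemma FDist.apply_le_one (δ : FDist X) (x : X) : δ.f x ≤ 1 :=
  δ.sum_one ▸ Finset.single_le_sum (fun y _ => δ.nonneg y) (Finset.mem_univ x)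

@[simp] lemma FDist.mem_support {δ : FDist X} {x : X} : x ∈ δ.support ↔ 0 < δ.f x := by
  simp [FDist.support]

lemma uniform_pos {L : Finset X} (hL : L.Nonempty) {x : X} (hx : x ∈ L) :
    0 < (uniform L hL).f x := by
  simp only [uniform, if_pos hx]
  have : (0 : ℝ) < L.card := by exact_mod_cast hL.card_pos
  positivity

lemma inv_card_le_uniform {L : Finset X} (hL : L.Nonempty) {x : X} (hx : x ∈ L) :
    (Fintype.card X : ℝ)⁻¹ ≤ (uniform L hL).f x := by
  simp only [uniform, if_pos hx]
  exact inv_anti₀ (by exact_mod_cast hL.card_pos) (by exact_mod_cast L.card_le_univ)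

lemma uniformD_pos_of_mem [Nonempty X] {L : Finset X} {x : X} (hx : x ∈ L) :
    0 < (uniformD L).f x := by
  rw [uniformD, dif_pos ⟨x, hx⟩]
  exact uniform_pos _ hx

lemma mem_of_uniformD_pos [Nonempty X] {L : Finset X} (hL : L.Nonempty) {x : X}
    (hx : 0 < (uniformD L).f x) : x ∈ L := by
  rw [uniformD, dif_pos hL] at hx
  by_contra hmem
  simp [uniform, hmem] at hx

lemma inv_card_le_uniformD [Nonempty X] {L : Finset X} {x : X} (hx : 0 < (uniformD L).f x) :
    (Fintype.card X : ℝ)⁻¹ ≤ (uniformD L).f x := by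
  by_cases hL : L.Nonempty
  · rw [uniformD, dif_pos hL] at hx ⊢
    exact inv_card_le_uniform hL (mem_of_uniformD_pos hL (by rwa [uniformD, dif_pos hL]))
  · rw [uniformD, dif_neg hL] at hx ⊢
    exact inv_card_le_uniform _ (Finset.mem_univ x)

@[simp] lemma dirac_self (x : X) : (dirac x).f x = 1 := by simp [dirac]

lemma dirac_of_ne {x y : X} (h : y ≠ x) : (dirac x).f y = 0 := by simp [dirac, h]

lemma FDist.exists_inv_card_le (δ : FDist X) [Nonempty X] :
    ∃ x, (Fintype.card X : ℝ)⁻¹ ≤ δ.f x := by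
  obtain ⟨x, -, hx⟩ := Finset.exists_le_of_sum_le Finset.univ_nonempty
    (f := fun _ => (Fintype.card X : ℝ)⁻¹) (g := δ.f) (by
      rw [δ.sum_one, Finset.sum_const, Finset.card_univ, nsmul_eq_mul,
        mul_inv_cancel₀ (by exact_mod_cast Fintype.card_ne_zero)])
  exact ⟨x, hx⟩

lemma exists_pos_le_of_pos (f : X → ℝ) :
    ∃ ρ, 0 < ρ ∧ ρ ≤ 1 ∧ ∀ x, 0 < f x → ρ ≤ f x := by
  set s := insert 1 ((Finset.univ.filter fun x => 0 < f x).image f)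
  have hs : s.Nonempty := Finset.insert_nonempty _ _
  refine ⟨s.min' hs, ?_, s.min'_le _ (Finset.mem_insert_self _ _), fun x hx => ?_⟩
  · refine (Finset.lt_min'_iff s hs).2 fun y hy => ?_
    rcases Finset.mem_insert.1 hy with rfl | hy
    · exact one_pos
    · obtain ⟨x, hx, rfl⟩ := Finset.mem_image.1 hy
      exact (Finset.mem_filter.1 hx).2
  · exact s.min'_le _ (Finset.mem_insert_of_mem (Finset.mem_image_of_mem f (by simpa using hx)))

end Distributions

lemma mul_pos_iff_of_nonneg {α : Type*} [Semiring α] [LinearOrder α] [IsStrictOrderedRing α]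
    {a b : α} (ha : 0 ≤ a) (hb : 0 ≤ b) : 0 < a * b ↔ 0 < a ∧ 0 < b :=
  ⟨fun h => ⟨pos_of_mul_pos_left h hb, pos_of_mul_pos_right h ha⟩, fun h => mul_pos h.1 h.2⟩

section Plays

variable {K C D : Type*}

namespace Hist

variable {n m : ℕ}

def extend (h : Hist K C D n) (x : C × D × K) : Hist K C D (n + 1) :=
  ⟨h.first, Fin.snoc h.steps x⟩

@[simp] lemma extend_first (h : Hist K C D n) (x : C × D × K) :
    (h.extend x).first = h.first := rfl

@[simp] lemma init_extend (h : Hist K C D n) (x : C × D × K) : (h.extend x).init = h := by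
  simp [extend, init]

@[simp] lemma extend_steps_last (h : Hist K C D n) (x : C × D × K) :
    (h.extend x).steps (Fin.last n) = x := by
  simp [extend]

@[simp] lemma last_extend (h : Hist K C D n) (x : C × D × K) : (h.extend x).last = x.2.2 := by
  simp [last, extend]

lemma init_extend_last (h : Hist K C D (n + 1)) : h.init.extend (h.steps (Fin.last n)) = h := by
  cases h
  simp only [extend, init, Hist.mk.injEq, true_and]
  exact Fin.snoc_init_self _

@[elab_as_elim]
lemma extend_induction {motive : ∀ n, Hist K C D n → Prop}
    (zero : ∀ k, motive 0 ⟨k, Fin.elim0⟩)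
    (extend : ∀ n (h : Hist K C D n) x, motive n h → motive (n + 1) (h.extend x)) :
    ∀ n h, motive n h := by
  intro n
  induction n with
  | zero =>
    rintro ⟨k, s⟩
    convert zero k
  | succ n ih =>
    intro h
    rw [← init_extend_last h]
    exact extend n _ _ (ih _)

@[simp] lemma sig1_length (h : Hist K C D n) : h.sig1.length = n := by simp [sig1]

@[simp] lemma sig2_length (h : Hist K C D n) : h.sig2.length = n := by simp [sig2]

@[simp] lemma sig1_zero (h : Hist K C D 0) : h.sig1 = [] := by simp [sig1]

@[simp] lemma sig2_zero (h : Hist K C D 0) : h.sig2 = [] := by simp [sig2]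

@[simp] lemma sig1_extend (h : Hist K C D n) (x : C × D × K) :
    (h.extend x).sig1 = h.sig1 ++ [x.1] := by
  simp only [sig1, extend, List.ofFn_succ', Fin.snoc_castSucc, Fin.snoc_last, List.concat_eq_append]

@[simp] lemma sig2_extend (h : Hist K C D n) (x : C × D × K) :
    (h.extend x).sig2 = h.sig2 ++ [x.2.1] := by
  simp only [sig2, extend, List.ofFn_succ', Fin.snoc_castSucc, Fin.snoc_last, List.concat_eq_append]

lemma state_last (h : Hist K C D n) : h.state (Fin.last n) = h.last := by
  cases n <;> rfl

lemma state_extend_castSucc (h : Hist K C D n) (x : C × D × K) (r : Fin (n + 1)) :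
    (h.extend x).state r.castSucc = h.state r := by
  simp only [state, extend, Fin.val_castSucc]
  by_cases hr : (r : ℕ) = 0
  · rw [dif_pos hr, dif_pos hr]
  · rw [dif_neg hr, dif_neg hr]
    have hlt : (r : ℕ) - 1 < n := by omega
    exact congrArg (fun y : C × D × K => y.2.2) (Fin.snoc_castSucc (i := ⟨r - 1, hlt⟩) ..)

lemma visits_extend {T : Finset K} (h : Hist K C D n) (x : C × D × K) :
    (h.extend x).visits T ↔ h.visits T ∨ x.2.2 ∈ T := by
  constructor
  · rintro ⟨r, hr⟩
    rcases Fin.eq_castSucc_or_eq_last r with ⟨r, rfl⟩ | rfl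
    · exact Or.inl ⟨r, by rwa [state_extend_castSucc] at hr⟩
    · exact Or.inr (by rwa [state_last, last_extend] at hr)
  · rintro (⟨r, hr⟩ | hx)
    · exact ⟨r.castSucc, by rwa [state_extend_castSucc]⟩
    · exact ⟨Fin.last _, by rwa [state_last, last_extend]⟩

lemma visits_of_last_mem {T : Finset K} (h : Hist K C D n) (hl : h.last ∈ T) : h.visits T :=
  ⟨Fin.last n, by rwa [state_last]⟩

lemma visits_zero_iff {T : Finset K} (h : Hist K C D 0) : h.visits T ↔ h.first ∈ T :=
  ⟨fun ⟨r, hr⟩ => by rwa [Fin.fin_one_eq_zero r] at hr, visits_of_last_mem h⟩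

def glue (h : Hist K C D n) (s : Fin m → C × D × K) : Hist K C D (n + m) :=
  ⟨h.first, Fin.append h.steps s⟩

def tail (h : Hist K C D n) (s : Fin m → C × D × K) : Hist K C D m := ⟨h.last, s⟩

@[simp] lemma glue_zero (h : Hist K C D n) (s : Fin 0 → C × D × K) : h.glue s = h := by
  cases h
  simp only [glue, Hist.mk.injEq, true_and]
  exact Fin.append_right_nil _ _ rfl

lemma glue_snoc (h : Hist K C D n) (s : Fin m → C × D × K) (x : C × D × K) :
    h.glue (Fin.snoc s x) = (h.glue s).extend x := by
  simp only [glue, extend, Hist.mk.injEq, true_and]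
  exact Fin.append_snoc _ _ _

lemma tail_snoc (h : Hist K C D n) (s : Fin m → C × D × K) (x : C × D × K) :
    h.tail (Fin.snoc s x) = (h.tail s).extend x := rfl

lemma snoc_induction {motive : ∀ m, (Fin m → C × D × K) → Prop} (zero : ∀ s, motive 0 s)
    (snoc : ∀ m s x, motive m s → motive (m + 1) (Fin.snoc s x)) : ∀ m s, motive m s := by
  intro m
  induction m with
  | zero => exact zero
  | succ m ih => exact fun s => Fin.snoc_init_self s ▸ snoc m _ _ (ih _)

lemma last_glue (h : Hist K C D n) {m : ℕ} (s : Fin m → C × D × K) :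
    (h.glue s).last = (h.tail s).last := by
  induction m, s using snoc_induction with
  | zero => rw [glue_zero]; rfl
  | snoc m s x _ => rw [glue_snoc, tail_snoc, last_extend, last_extend]

lemma sig1_glue (h : Hist K C D n) {m : ℕ} (s : Fin m → C × D × K) :
    (h.glue s).sig1 = h.sig1 ++ (h.tail s).sig1 := by
  induction m, s using snoc_induction with
  | zero => rw [glue_zero, sig1_zero, List.append_nil]
  | snoc m s x ih => rw [glue_snoc, tail_snoc, sig1_extend, sig1_extend, ih, List.append_assoc]

lemma sig2_glue (h : Hist K C D n) {m : ℕ} (s : Fin m → C × D × K) :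
    (h.glue s).sig2 = h.sig2 ++ (h.tail s).sig2 := by
  induction m, s using snoc_induction with
  | zero => rw [glue_zero, sig2_zero, List.append_nil]
  | snoc m s x ih => rw [glue_snoc, tail_snoc, sig2_extend, sig2_extend, ih, List.append_assoc]

lemma visits_glue {T : Finset K} (h : Hist K C D n) {m : ℕ} (s : Fin m → C × D × K) :
    (h.glue s).visits T ↔ h.visits T ∨ (h.tail s).visits T := by
  induction m, s using snoc_induction with
  | zero =>
    rw [glue_zero, visits_zero_iff]
    exact ⟨Or.inl, fun hv => hv.elim id (visits_of_last_mem h)⟩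
  | snoc m s x ih => rw [glue_snoc, tail_snoc, visits_extend, visits_extend, ih, or_assoc]

end Hist

def histSuccEquiv (n : ℕ) : Hist K C D (n + 1) ≃ Hist K C D n × (C × D × K) where
  toFun h := (h.init, h.steps (Fin.last n))
  invFun p := p.1.extend p.2
  left_inv h := Hist.init_extend_last h
  right_inv p := by simp

def histGlueEquiv (n m : ℕ) : Hist K C D (n + m) ≃ Hist K C D n × (Fin m → C × D × K) where
  toFun h := (⟨h.first, fun i => h.steps (Fin.castAdd m i)⟩, fun r => h.steps (Fin.natAdd n r))
  invFun p := p.1.glue p.2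
  left_inv h := by
    simp only [Hist.glue, Fin.append_castAdd_natAdd]
  right_inv p := by
    simp [Hist.glue]

def histEquivProd (n : ℕ) : Hist K C D n ≃ K × (Fin n → C × D × K) where
  toFun h := (h.first, h.steps)
  invFun p := ⟨p.1, p.2⟩

variable [Fintype K] [Fintype C] [Fintype D] {M : Type*} [AddCommMonoid M]

lemma sum_hist_succ (n : ℕ) (f : Hist K C D (n + 1) → M) :
    ∑ h, f h = ∑ h : Hist K C D n, ∑ x, f (h.extend x) := by
  rw [← (histSuccEquiv n).symm.sum_comp, Fintype.sum_prod_type]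
  rfl

lemma sum_hist_glue (n m : ℕ) (f : Hist K C D (n + m) → M) :
    ∑ h, f h = ∑ h : Hist K C D n, ∑ s : Fin m → C × D × K, f (h.glue s) := by
  rw [← (histGlueEquiv n m).symm.sum_comp, Fintype.sum_prod_type]
  rfl

lemma sum_hist_eq_sum_first (n : ℕ) (f : Hist K C D n → M) :
    ∑ h, f h = ∑ k, ∑ s : Fin n → C × D × K, f ⟨k, s⟩ := by
  rw [← (histEquivProd n).symm.sum_comp, Fintype.sum_prod_type]
  rfl

lemma sum_hist_zero (f : Hist K C D 0 → M) : ∑ h, f h = ∑ k, f ⟨k, Fin.elim0⟩ := by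
  rw [sum_hist_eq_sum_first]
  exact Finset.sum_congr rfl fun k _ => by rw [Fintype.sum_unique]; congr

end Plays

section SequenceWeights

variable {X Y : Type*} [Fintype Y]

def shifted {Z : Sort*} (u : List X → Z) (pre : List X) : List X → Z := fun l => u (pre ++ l)

lemma shifted_shifted {Z : Sort*} (u : List X → Z) (pre pre' : List X) :
    shifted (shifted u pre) pre' = shifted u (pre ++ pre') := by
  funext l; simp [shifted, List.append_assoc]

/-- The probability that the behavioral strategy `u` plays the actions `a x₁, a x₂, …`
when it observes the signals `x₁, x₂, …` of `l` one after the other. -/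
def seqWeight (u : List X → FDist Y) (a : X → Y) : List X → ℝ
  | [] => 1
  | x :: l => (u []).f (a x) * seqWeight (shifted u [x]) a l

variable (a : X → Y)

@[simp] lemma seqWeight_nil (u : List X → FDist Y) : seqWeight u a [] = 1 := rfl

lemma seqWeight_append (l₁ l₂ : List X) (u : List X → FDist Y) :
    seqWeight u a (l₁ ++ l₂) = seqWeight u a l₁ * seqWeight (shifted u l₁) a l₂ := by
  induction l₁ generalizing u with
  | nil => rw [List.nil_append, seqWeight_nil, one_mul]; rfl
  | cons x l₁ ih =>
    rw [List.cons_append, seqWeight, seqWeight, ih, shifted_shifted, mul_assoc]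
    rfl

lemma seqWeight_snoc (u : List X → FDist Y) (l : List X) (x : X) :
    seqWeight u a (l ++ [x]) = seqWeight u a l * (u l).f (a x) := by
  rw [seqWeight_append, seqWeight, seqWeight_nil, mul_one, shifted, List.append_nil]

lemma seqWeight_nonneg (u : List X → FDist Y) (l : List X) : 0 ≤ seqWeight u a l := by
  induction l using List.reverseRecOn with
  | nil => simp
  | append_singleton l x ih => rw [seqWeight_snoc]; exact mul_nonneg ih ((u l).nonneg _)

lemma seqWeight_le_one (u : List X → FDist Y) (l : List X) : seqWeight u a l ≤ 1 := by
  induction l using List.reverseRecOn with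
  | nil => simp
  | append_singleton l x ih =>
    rw [seqWeight_snoc]
    exact mul_le_one₀ ih ((u l).nonneg _) ((u l).apply_le_one _)

end SequenceWeights

section Mixture

variable {ι X Y : Type*} [Fintype Y] (e : ι ≃ ℕ)

def geomWeight (q : ι) : ℝ := 1 / 2 / 2 ^ e q

lemma geomWeight_pos (q : ι) : 0 < geomWeight e q := by
  rw [geomWeight]; positivity

lemma summable_geomWeight : Summable (geomWeight e) :=
  (e.summable_iff (f := fun n => 1 / 2 / 2 ^ n)).2 (summable_geometric_two' 1)

lemma tsum_geomWeight : ∑' q, geomWeight e q = 1 :=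
  (e.tsum_eq fun n => 1 / 2 / 2 ^ n).trans (tsum_geometric_two' 1)

variable (u : ι → List X → FDist Y) (a : X → Y)

def mixDen (ds : List X) : ℝ := ∑' q, geomWeight e q * seqWeight (u q) a ds

lemma summable_mixNum (ds : List X) (y : Y) :
    Summable fun q => geomWeight e q * seqWeight (u q) a ds * (u q ds).f y :=
  (summable_geomWeight e).of_nonneg_of_le
    (fun q => mul_nonneg (mul_nonneg (geomWeight_pos e q).le (seqWeight_nonneg _ _ _))
      ((u q ds).nonneg y))
    fun q => mul_le_of_le_one_right (mul_nonneg (geomWeight_pos e q).le (seqWeight_nonneg _ _ _))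
      ((u q ds).apply_le_one y) |>.trans
        (mul_le_of_le_one_right (geomWeight_pos e q).le (seqWeight_le_one _ _ _))

lemma summable_mixDen (ds : List X) :
    Summable fun q => geomWeight e q * seqWeight (u q) a ds :=
  (summable_geomWeight e).of_nonneg_of_le
    (fun q => mul_nonneg (geomWeight_pos e q).le (seqWeight_nonneg _ _ _))
    fun q => mul_le_of_le_one_right (geomWeight_pos e q).le (seqWeight_le_one _ _ _)

lemma geomWeight_mul_le_mixDen (q : ι) (ds : List X) :
    geomWeight e q * seqWeight (u q) a ds ≤ mixDen e u a ds :=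
  (summable_mixDen e u a ds).le_tsum q fun q' _ =>
    mul_nonneg (geomWeight_pos e q').le (seqWeight_nonneg _ _ _)

/-- Kuhn's theorem for a countable mixture of behavioral strategies: after `ds`, play the
average of the `u q`, each weighted by its prior weight times the probability that it
produced `ds`. -/
def behavioralMix [Nonempty Y] (ds : List X) : FDist Y :=
  if hden : 0 < mixDen e u a ds then
    { f := fun y => (∑' q, geomWeight e q * seqWeight (u q) a ds * (u q ds).f y) / mixDen e u a ds
      nonneg := fun y => div_nonneg (tsum_nonneg fun q => mul_nonneg (mul_nonneg
        (geomWeight_pos e q).le (seqWeight_nonneg _ _ _)) ((u q ds).nonneg y)) hden.le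
      sum_one := by
        rw [← Finset.sum_div, div_eq_one_iff_eq hden.ne',
          ← Summable.tsum_finsetSum fun y _ => summable_mixNum e u a ds y, mixDen]
        exact tsum_congr fun q => by rw [← Finset.mul_sum, (u q ds).sum_one, mul_one] }
  else uniformD Finset.univ

lemma seqWeight_behavioralMix [Nonempty Y] (ds : List X) :
    seqWeight (behavioralMix e u a) a ds = mixDen e u a ds := by
  induction ds using List.reverseRecOn with
  | nil => simp [mixDen, tsum_geomWeight]
  | append_singleton ds x ih =>
    have hsnoc : ∀ q, geomWeight e q * seqWeight (u q) a (ds ++ [x])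
        = geomWeight e q * seqWeight (u q) a ds * (u q ds).f (a x) := fun q => by
      rw [seqWeight_snoc, mul_assoc]
    rw [seqWeight_snoc, ih]
    conv_rhs => rw [mixDen, tsum_congr hsnoc]
    by_cases hden : 0 < mixDen e u a ds
    · rw [behavioralMix, dif_pos hden]
      exact mul_div_cancel₀ _ hden.ne'
    · have hzero : ∀ q, geomWeight e q * seqWeight (u q) a ds = 0 := fun q =>
        le_antisymm ((geomWeight_mul_le_mixDen e u a q ds).trans (not_lt.1 hden))
          (mul_nonneg (geomWeight_pos e q).le (seqWeight_nonneg _ _ _))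
      have : mixDen e u a ds = 0 := by simp [mixDen, hzero]
      simp [this, hzero]

lemma geomWeight_mul_le_seqWeight_behavioralMix [Nonempty Y] (q : ι) (ds : List X) :
    geomWeight e q * seqWeight (u q) a ds ≤ seqWeight (behavioralMix e u a) a ds :=
  seqWeight_behavioralMix e u a ds ▸ geomWeight_mul_le_mixDen e u a q ds

end Mixture

section Patterns

variable {J D : Type*} [Fintype J]

def patStrat [Nonempty J] (𝔖 : List D → Finset J) : Strategy2 J D := fun ds => uniformD (𝔖 ds)

def threshPat (τ : Strategy2 J D) (ds : List D) : Finset J :=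
  Finset.univ.filter fun j => (Fintype.card J : ℝ)⁻¹ ≤ (τ ds).f j

lemma inv_card_le_of_patStrat_threshPat_pos [Nonempty J] {τ : Strategy2 J D} {ds : List D}
    {j : J} (hj : 0 < (patStrat (threshPat τ) ds).f j) : (Fintype.card J : ℝ)⁻¹ ≤ (τ ds).f j := by
  obtain ⟨j', hj'⟩ := (τ ds).exists_inv_card_le
  have hne : (threshPat τ ds).Nonempty := ⟨j', Finset.mem_filter.2 ⟨Finset.mem_univ _, hj'⟩⟩
  exact (Finset.mem_filter.1 (mem_of_uniformD_pos hne hj)).2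

end Patterns

section

-- Shadows the ambient variables, whose `Nonempty` instances would otherwise be included.
variable {K I J C D : Type*} [Fintype K] [Fintype I] [Fintype J] [Fintype C] [Fintype D]

namespace Game

section Probabilities

variable (G : Game K I J C D) (δ : FDist K) (σ : Strategy1 I C) (τ : Strategy2 J D)

lemma p_eq_zero_of_ne {k : K} {i : I} {j : J} {c : C} {d : D} {l : K}
    (h : i ≠ G.act₁ c ∨ j ≠ G.act₂ d) : G.p k i j (c, d, l) = 0 :=
  (G.p_nonneg k i j _).eq_or_lt.elim Eq.symm fun hp =>
    absurd (G.act_compat k i j c d l hp) (by tauto)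

/-- Since the signals reveal the actions, only one pair of actions contributes to a step. -/
lemma sum_actions_eq (k : K) (a : I → ℝ) (b : J → ℝ) (x : C × D × K) :
    ∑ i, ∑ j, a i * b j * G.p k i j x
      = a (G.act₁ x.1) * b (G.act₂ x.2.1) * G.p k (G.act₁ x.1) (G.act₂ x.2.1) x := by
  obtain ⟨c, d, l⟩ := x
  rw [Fintype.sum_eq_single (G.act₁ c), Fintype.sum_eq_single (G.act₂ d)]
  · exact fun j hj => by rw [G.p_eq_zero_of_ne (Or.inr hj), mul_zero]
  · exact fun i hi => Finset.sum_eq_zero fun j _ => by rw [G.p_eq_zero_of_ne (Or.inl hi), mul_zero]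

lemma playProb_zero (h : Hist K C D 0) : G.playProb δ σ τ 0 h = δ.f h.first := rfl

lemma playProb_extend {n : ℕ} (h : Hist K C D n) (x : C × D × K) :
    G.playProb δ σ τ (n + 1) (h.extend x) = G.playProb δ σ τ n h *
      ((σ h.sig1).f (G.act₁ x.1) * (τ h.sig2).f (G.act₂ x.2.1) *
        G.p h.last (G.act₁ x.1) (G.act₂ x.2.1) x) := by
  rw [playProb, Hist.init_extend, Hist.extend_steps_last, sum_actions_eq]

lemma playProb_nonneg {n : ℕ} (h : Hist K C D n) : 0 ≤ G.playProb δ σ τ n h := by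
  induction n, h using Hist.extend_induction with
  | zero k => exact δ.nonneg k
  | extend n h x ih =>
    rw [playProb_extend]
    exact mul_nonneg ih (mul_nonneg (mul_nonneg ((σ _).nonneg _) ((τ _).nonneg _))
      (G.p_nonneg _ _ _ _))

lemma playProb_extend_pos_iff {n : ℕ} (h : Hist K C D n) (x : C × D × K) :
    0 < G.playProb δ σ τ (n + 1) (h.extend x) ↔ 0 < G.playProb δ σ τ n h ∧
      0 < (σ h.sig1).f (G.act₁ x.1) ∧ 0 < (τ h.sig2).f (G.act₂ x.2.1) ∧
      0 < G.p h.last (G.act₁ x.1) (G.act₂ x.2.1) x := by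
  have hσ := (σ h.sig1).nonneg (G.act₁ x.1)
  have hτ := (τ h.sig2).nonneg (G.act₂ x.2.1)
  have hp := G.p_nonneg h.last (G.act₁ x.1) (G.act₂ x.2.1) x
  rw [playProb_extend, mul_pos_iff_of_nonneg (G.playProb_nonneg δ σ τ h) (by positivity),
    mul_pos_iff_of_nonneg (by positivity) hp, mul_pos_iff_of_nonneg hσ hτ, and_assoc]

lemma sum_playProb_extend {n : ℕ} (h : Hist K C D n) :
    ∑ x, G.playProb δ σ τ (n + 1) (h.extend x) = G.playProb δ σ τ n h := by
  simp only [playProb, Hist.init_extend, Hist.extend_steps_last]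
  have hstep : ∑ x, ∑ i, ∑ j, (σ h.sig1).f i * (τ h.sig2).f j * G.p h.last i j x = 1 := calc
    _ = ∑ i, ∑ j, (σ h.sig1).f i * (τ h.sig2).f j * ∑ x, G.p h.last i j x := by
        simp_rw [Finset.mul_sum]
        rw [Finset.sum_comm]
        exact Finset.sum_congr rfl fun i _ => Finset.sum_comm
    _ = 1 := by simp [G.p_sum, ← Finset.mul_sum, FDist.sum_one]
  rw [← Finset.mul_sum, hstep, mul_one]

lemma sum_playProb (n : ℕ) : ∑ h, G.playProb δ σ τ n h = 1 := by
  induction n with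
  | zero => rw [sum_hist_zero]; exact δ.sum_one
  | succ n ih => simp_rw [sum_hist_succ, sum_playProb_extend, ih]

/-- The factor of `playProb` that does not depend on the strategies. -/
def chanceWeight : ∀ n : ℕ, Hist K C D n → ℝ
  | 0, h => δ.f h.first
  | n + 1, h =>
      chanceWeight n h.init *
        G.p h.init.last (G.act₁ (h.steps (Fin.last n)).1) (G.act₂ (h.steps (Fin.last n)).2.1)
          (h.steps (Fin.last n))

lemma chanceWeight_extend {n : ℕ} (h : Hist K C D n) (x : C × D × K) :
    G.chanceWeight δ (n + 1) (h.extend x)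
      = G.chanceWeight δ n h * G.p h.last (G.act₁ x.1) (G.act₂ x.2.1) x := by
  rw [chanceWeight, Hist.init_extend, Hist.extend_steps_last]

lemma chanceWeight_nonneg {n : ℕ} (h : Hist K C D n) : 0 ≤ G.chanceWeight δ n h := by
  induction n, h using Hist.extend_induction with
  | zero k => exact δ.nonneg k
  | extend n h x ih => rw [chanceWeight_extend]; exact mul_nonneg ih (G.p_nonneg _ _ _ _)

lemma playProb_eq_mul {n : ℕ} (h : Hist K C D n) : G.playProb δ σ τ n h =
    G.chanceWeight δ n h * seqWeight σ G.act₁ h.sig1 * seqWeight τ G.act₂ h.sig2 := by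
  induction n, h using Hist.extend_induction with
  | zero k => simp [playProb_zero, chanceWeight]
  | extend n h x ih =>
    rw [playProb_extend, chanceWeight_extend, ih, Hist.sig1_extend, Hist.sig2_extend,
      seqWeight_snoc, seqWeight_snoc]
    ring

lemma playProb_dirac_of_first_ne {k : K} {n : ℕ} (h : Hist K C D n) (hk : h.first ≠ k) :
    G.playProb (dirac k) σ τ n h = 0 := by
  induction n, h using Hist.extend_induction with
  | zero k' => exact dirac_of_ne hk
  | extend n h x ih => rw [playProb_extend, ih hk, zero_mul]

lemma playProb_glue {n : ℕ} (h : Hist K C D n) {m : ℕ} (s : Fin m → C × D × K) :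
    G.playProb δ σ τ (n + m) (h.glue s) = G.playProb δ σ τ n h *
      G.playProb (dirac h.last) (shifted σ h.sig1) (shifted τ h.sig2) m (h.tail s) := by
  induction m, s using Hist.snoc_induction with
  | zero s =>
    change G.playProb δ σ τ n (h.glue s) = _ * (dirac h.last).f h.last
    rw [Hist.glue_zero, dirac_self, mul_one]
  | snoc m s x ih =>
    change G.playProb δ σ τ (n + m + 1) _ = _
    rw [Hist.glue_snoc, Hist.tail_snoc, playProb_extend, playProb_extend, ih,
      Hist.sig1_glue, Hist.sig2_glue, Hist.last_glue]
    simp only [shifted]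
    ring

def avoidProb (n : ℕ) : ℝ :=
  ∑ h : Hist K C D n, if h.visits G.T then 0 else G.playProb δ σ τ n h

lemma reachProb_add_avoidProb (n : ℕ) : G.reachProb δ σ τ n + G.avoidProb δ σ τ n = 1 := by
  rw [reachProb, avoidProb, ← Finset.sum_add_distrib, ← G.sum_playProb δ σ τ n]
  exact Finset.sum_congr rfl fun h _ => by split_ifs <;> ring

lemma avoidProb_nonneg (n : ℕ) : 0 ≤ G.avoidProb δ σ τ n :=
  Finset.sum_nonneg fun h _ => by split_ifs <;> simp [G.playProb_nonneg]

lemma reachProb_nonneg (n : ℕ) : 0 ≤ G.reachProb δ σ τ n :=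
  Finset.sum_nonneg fun h _ => by split_ifs <;> simp [G.playProb_nonneg]

lemma reachProb_le_one (n : ℕ) : G.reachProb δ σ τ n ≤ 1 := by
  linarith [G.reachProb_add_avoidProb δ σ τ n, G.avoidProb_nonneg δ σ τ n]

lemma avoidProb_le_one (n : ℕ) : G.avoidProb δ σ τ n ≤ 1 := by
  linarith [G.reachProb_add_avoidProb δ σ τ n, G.reachProb_nonneg δ σ τ n]

lemma avoidProb_succ_le (n : ℕ) : G.avoidProb δ σ τ (n + 1) ≤ G.avoidProb δ σ τ n := by
  rw [avoidProb, avoidProb, sum_hist_succ]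
  refine Finset.sum_le_sum fun h _ => ?_
  split_ifs with hv
  · exact (Finset.sum_eq_zero fun x _ =>
      if_pos ((Hist.visits_extend h x).2 (Or.inl hv))).le
  · refine (Finset.sum_le_sum fun x _ => ?_).trans (G.sum_playProb_extend δ σ τ h).le
    split_ifs
    exacts [G.playProb_nonneg _ _ _ _, le_rfl]

lemma avoidProb_antitone : Antitone (G.avoidProb δ σ τ) :=
  antitone_nat_of_succ_le (G.avoidProb_succ_le δ σ τ)

lemma reachProb_le_val (n : ℕ) : G.reachProb δ σ τ n ≤ G.val δ σ τ :=
  le_ciSup ⟨1, Set.forall_mem_range.2 (G.reachProb_le_one δ σ τ)⟩ n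

lemma val_le_one : G.val δ σ τ ≤ 1 := ciSup_le (G.reachProb_le_one δ σ τ)

lemma val_lt_one_of_le_avoidProb {c : ℝ} (hc : 0 < c) (h : ∀ n, c ≤ G.avoidProb δ σ τ n) :
    G.val δ σ τ < 1 := by
  have : G.val δ σ τ ≤ 1 - c :=
    ciSup_le fun n => by linarith [G.reachProb_add_avoidProb δ σ τ n, h n]
  linarith

lemma val_eq_one_of_avoidProb_add_le {ε : ℝ} (hε : 0 < ε) (hε1 : ε ≤ 1) (N : ℕ)
    (hN : ∀ n, G.avoidProb δ σ τ (n + N) ≤ (1 - ε) * G.avoidProb δ σ τ n) :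
    G.val δ σ τ = 1 := by
  have hpow : ∀ m, G.avoidProb δ σ τ (m * N) ≤ (1 - ε) ^ m := by
    intro m
    induction m with
    | zero => simpa using G.avoidProb_le_one δ σ τ 0
    | succ m ih =>
      rw [add_mul, one_mul, pow_succ']
      exact (hN _).trans (mul_le_mul_of_nonneg_left ih (by linarith))
  refine le_antisymm (G.val_le_one δ σ τ) (le_of_not_gt fun hlt => ?_)
  obtain ⟨m, hm⟩ := exists_pow_lt_of_lt_one (sub_pos.2 hlt) (by linarith : 1 - ε < 1)
  linarith [G.reachProb_add_avoidProb δ σ τ (m * N), G.reachProb_le_val δ σ τ (m * N), hpow m]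

lemma avoidProb_dirac (k : K) (m : ℕ) : G.avoidProb (dirac k) σ τ m =
    ∑ s : Fin m → C × D × K, if (⟨k, s⟩ : Hist K C D m).visits G.T then 0
      else G.playProb (dirac k) σ τ m ⟨k, s⟩ := by
  rw [avoidProb, sum_hist_eq_sum_first, Fintype.sum_eq_single k]
  exact fun k' hk' => Finset.sum_eq_zero fun s _ => by
    rw [G.playProb_dirac_of_first_ne σ τ ⟨k', s⟩ hk', ite_self]

lemma avoidProb_add (n m : ℕ) : G.avoidProb δ σ τ (n + m) =
    ∑ h : Hist K C D n, if h.visits G.T then 0 else G.playProb δ σ τ n h *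
      G.avoidProb (dirac h.last) (shifted σ h.sig1) (shifted τ h.sig2) m := by
  rw [avoidProb, sum_hist_glue]
  refine Finset.sum_congr rfl fun h _ => ?_
  split_ifs with hv
  · exact Finset.sum_eq_zero fun s _ => if_pos ((Hist.visits_glue h s).2 (Or.inl hv))
  · rw [avoidProb_dirac, Finset.mul_sum]
    refine Finset.sum_congr rfl fun s _ => ?_
    have hvs : (h.glue s).visits G.T ↔ (h.tail s).visits G.T := by
      rw [Hist.visits_glue, or_iff_right hv]
    rw [G.playProb_glue, ← Hist.tail, hvs]
    split_ifs <;> simp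

lemma geomWeight_mul_avoidProb_le [Nonempty J] {ι : Type*} (e : ι ≃ ℕ) (u : ι → Strategy2 J D)
    (q : ι) (n : ℕ) :
    geomWeight e q * G.avoidProb δ σ (u q) n ≤ G.avoidProb δ σ (behavioralMix e u G.act₂) n := by
  rw [avoidProb, avoidProb, Finset.mul_sum]
  refine Finset.sum_le_sum fun h _ => ?_
  split_ifs
  · rw [mul_zero]
  rw [playProb_eq_mul, playProb_eq_mul, mul_left_comm]
  exact mul_le_mul_of_nonneg_left (geomWeight_mul_le_seqWeight_behavioralMix e u _ q _)
    (mul_nonneg (G.chanceWeight_nonneg _ _) (seqWeight_nonneg _ _ _))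

end Probabilities

section Beliefs

variable (G : Game K I J C D) {δ : FDist K} {σ : Strategy1 I C} {τ : Strategy2 J D}

lemma mem_B1p {L : Finset K} {c : C} {k : K} :
    k ∈ G.B1p L c ↔ ∃ l ∈ L \ G.T, ∃ d, 0 < G.p l (G.act₁ c) (G.act₂ d) (c, d, k) := by
  simp [B1p, B1]

lemma B1pseq_append (L : Finset K) (cs cs' : List C) :
    G.B1pseq L (cs ++ cs') = G.B1pseq (G.B1pseq L cs) cs' :=
  List.foldl_append

lemma B1pseq_snoc (L : Finset K) (cs : List C) (c : C) :
    G.B1pseq L (cs ++ [c]) = G.B1p (G.B1pseq L cs) c := by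
  rw [B1pseq_append]; rfl

lemma seqWeight_pos_of_playProb_pos {n : ℕ} {h : Hist K C D n} (hpos : 0 < G.playProb δ σ τ n h) :
    0 < seqWeight σ G.act₁ h.sig1 := by
  rw [playProb_eq_mul] at hpos
  exact pos_of_mul_pos_right (pos_of_mul_pos_left hpos (seqWeight_nonneg _ _ _))
    (G.chanceWeight_nonneg _ _)

lemma last_mem_B1pseq {L : Finset K} (hδ : δ.support ⊆ L) {n : ℕ} (h : Hist K C D n)
    (hpos : 0 < G.playProb δ σ τ n h) (hv : ¬ h.visits G.T) : h.last ∈ G.B1pseq L h.sig1 := by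
  induction n, h using Hist.extend_induction with
  | zero k => exact hδ (FDist.mem_support.2 hpos)
  | extend n h x ih =>
    obtain ⟨hpos, -, -, hp⟩ := (G.playProb_extend_pos_iff δ σ τ h x).1 hpos
    rw [Hist.visits_extend, not_or] at hv
    rw [Hist.sig1_extend, B1pseq_snoc, Hist.last_extend, mem_B1p]
    exact ⟨h.last, Finset.mem_sdiff.2 ⟨ih hpos hv.1, fun hT => hv.1 (h.visits_of_last_mem hT)⟩,
      x.2.1, hp⟩

lemma exists_play_of_mem_B1pseq {cs : List C}
    (hτ : ∀ ds j, ds.length < cs.length → 0 < (τ ds).f j)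
    (hσ : 0 < seqWeight σ G.act₁ cs) {k : K} (hk : k ∈ G.B1pseq δ.support cs) (hkT : k ∉ G.T) :
    ∃ (n : ℕ) (h : Hist K C D n), ¬ h.visits G.T ∧ h.sig1 = cs ∧ h.last = k ∧
      0 < G.playProb δ σ τ n h := by
  induction cs using List.reverseRecOn generalizing k with
  | nil =>
    exact ⟨0, ⟨k, Fin.elim0⟩, by rwa [Hist.visits_zero_iff], Hist.sig1_zero _, rfl,
      FDist.mem_support.1 hk⟩
  | append_singleton cs c ih =>
    rw [seqWeight_snoc] at hσ
    rw [B1pseq_snoc, mem_B1p] at hk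
    obtain ⟨l, hl, d, hp⟩ := hk
    obtain ⟨n, h, hv, rfl, rfl, hpos⟩ := ih (fun ds j hds => hτ ds j (by simp; omega))
      (pos_of_mul_pos_left hσ ((σ _).nonneg _)) (Finset.mem_sdiff.1 hl).1
      (Finset.mem_sdiff.1 hl).2
    refine ⟨n + 1, h.extend (c, d, k), by simp [Hist.visits_extend, hv, hkT], by simp, by simp, ?_⟩
    refine (G.playProb_extend_pos_iff δ σ τ h _).2 ⟨hpos, ?_, hτ _ _ (by simp), hp⟩
    exact pos_of_mul_pos_right hσ (seqWeight_nonneg _ _ _)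

def SurelySafe (δ : FDist K) (σ : Strategy1 I C) (τ : Strategy2 J D) : Prop :=
  ∀ n (h : Hist K C D n), 0 < G.playProb δ σ τ n h → ¬ h.visits G.T

lemma SurelySafe.avoidProb_eq_one {G : Game K I J C D} (hs : G.SurelySafe δ σ τ) (n : ℕ) :
    G.avoidProb δ σ τ n = 1 := by
  rw [avoidProb, ← G.sum_playProb δ σ τ n]
  refine Finset.sum_congr rfl fun h _ => ?_
  split_ifs with hv
  · exact ((G.playProb_nonneg δ σ τ h).eq_or_lt.resolve_right fun hp => hs n h hp hv)
  · rfl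

lemma le_avoidProb_of_surelySafe {n₀ : ℕ} (h₀ : Hist K C D n₀) (hv : ¬ h₀.visits G.T)
    (hs : G.SurelySafe (dirac h₀.last) (shifted σ h₀.sig1) (shifted τ h₀.sig2)) (n : ℕ) :
    G.playProb δ σ τ n₀ h₀ ≤ G.avoidProb δ σ τ n := by
  refine le_trans ?_ (G.avoidProb_antitone δ σ τ (Nat.le_add_left n n₀))
  rw [avoidProb_add]
  refine le_of_eq_of_le ?_ (Finset.single_le_sum (f := fun h : Hist K C D n₀ =>
    if h.visits G.T then 0 else G.playProb δ σ τ n₀ h *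
      G.avoidProb (dirac h.last) (shifted σ h.sig1) (shifted τ h.sig2) n) (fun h _ => ?_)
    (Finset.mem_univ h₀))
  · rw [if_neg hv, hs.avoidProb_eq_one, mul_one]
  · split_ifs
    exacts [le_rfl, mul_nonneg (G.playProb_nonneg _ _ _ _) (G.avoidProb_nonneg _ _ _ _)]

lemma SurelySafe.notMem {G : Game K I J C D} {k : K} (hs : G.SurelySafe (dirac k) σ τ) :
    k ∉ G.T := fun hk =>
  hs 0 ⟨k, Fin.elim0⟩ (by simp [playProb_zero]) ((Hist.visits_zero_iff _).2 hk)

lemma playProb_pos_of_support_subset {σ₁ σ₂ : Strategy1 I C}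
    (hsupp : ∀ n (h : Hist K C D n), 0 < G.playProb δ σ₁ τ n h →
      ∀ i, 0 < (σ₁ h.sig1).f i → 0 < (σ₂ h.sig1).f i)
    {n : ℕ} (h : Hist K C D n) (hpos : 0 < G.playProb δ σ₁ τ n h) :
    0 < G.playProb δ σ₂ τ n h := by
  induction n, h using Hist.extend_induction with
  | zero k => exact hpos
  | extend n h x ih =>
    obtain ⟨hpos, hσ, hτ, hp⟩ := (G.playProb_extend_pos_iff δ σ₁ τ h x).1 hpos
    exact (G.playProb_extend_pos_iff δ σ₂ τ h x).2 ⟨ih hpos, hsupp n h hpos _ hσ, hτ, hp⟩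

lemma SurelySafe.of_support_subset {G : Game K I J C D} {σ₁ σ₂ : Strategy1 I C}
    (hs : G.SurelySafe δ σ₂ τ)
    (hsupp : ∀ n (h : Hist K C D n), 0 < G.playProb δ σ₁ τ n h →
      ∀ i, 0 < (σ₁ h.sig1).f i → 0 < (σ₂ h.sig1).f i) :
    G.SurelySafe δ σ₁ τ :=
  fun n h hpos => hs n h (G.playProb_pos_of_support_subset hsupp h hpos)

end Beliefs

section ValidFamilies

variable (G : Game K I J C D)

def beliefStrat [Nonempty I] (𝔄 : Finset K → Finset I) (L : Finset K) : Strategy1 I C :=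
  fun cs => uniformD (𝔄 (G.B1pseq L cs))

lemma shifted_beliefStrat [Nonempty I] (𝔄 : Finset K → Finset I) (L : Finset K) (cs : List C) :
    shifted (G.beliefStrat 𝔄 L) cs = G.beliefStrat 𝔄 (G.B1pseq L cs) := by
  funext l
  simp only [shifted, beliefStrat, B1pseq_append]

/-- A certificate that player 1 wins almost surely from the beliefs in `𝒲`. -/
structure IsValidFamily [Nonempty I] [Nonempty J] (𝒲 : Set (Finset K))
    (𝔄 : Finset K → Finset I) : Prop where
  actions_nonempty : ∀ L ∈ 𝒲, (𝔄 L).Nonempty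
  B1p_mem : ∀ L ∈ 𝒲, ∀ c, G.act₁ c ∈ 𝔄 L → G.B1p L c ∈ 𝒲
  not_surelySafe : ∀ L ∈ 𝒲, ∀ k ∈ L, ∀ 𝔖 : List D → Finset J,
    ¬ G.SurelySafe (dirac k) (G.beliefStrat 𝔄 L) (patStrat 𝔖)

variable [Nonempty I] [Nonempty J]

def goodBeliefs : Set (Finset K) := {L | ∃ 𝒲 𝔄, G.IsValidFamily 𝒲 𝔄 ∧ L ∈ 𝒲}

def goodActions (L : Finset K) : Finset I :=
  Finset.univ.filter fun i => ∃ 𝒲 𝔄, G.IsValidFamily 𝒲 𝔄 ∧ L ∈ 𝒲 ∧ i ∈ 𝔄 L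

variable {G}

lemma IsValidFamily.subset_goodActions {𝒲 : Set (Finset K)} {𝔄 : Finset K → Finset I}
    (hV : G.IsValidFamily 𝒲 𝔄) {L : Finset K} (hL : L ∈ 𝒲) : 𝔄 L ⊆ G.goodActions L :=
  fun i hi => Finset.mem_filter.2 ⟨Finset.mem_univ i, 𝒲, 𝔄, hV, hL, hi⟩

lemma IsValidFamily.B1pseq_mem {𝒲 : Set (Finset K)} {𝔄 : Finset K → Finset I}
    (hV : G.IsValidFamily 𝒲 𝔄) {L : Finset K} (hL : L ∈ 𝒲) {δ : FDist K} {τ : Strategy2 J D}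
    {n : ℕ} (h : Hist K C D n) (hpos : 0 < G.playProb δ (G.beliefStrat 𝔄 L) τ n h) :
    G.B1pseq L h.sig1 ∈ 𝒲 := by
  induction n, h using Hist.extend_induction with
  | zero k => exact hL
  | extend n h x ih =>
    obtain ⟨hpos, hσ, -⟩ := (G.playProb_extend_pos_iff _ _ _ h x).1 hpos
    have hb := ih hpos
    rw [Hist.sig1_extend, B1pseq_snoc]
    exact hV.B1p_mem _ hb _ (mem_of_uniformD_pos (hV.actions_nonempty _ hb) hσ)

variable (G)

lemma isValidFamily_goodBeliefs : G.IsValidFamily G.goodBeliefs G.goodActions where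
  actions_nonempty := fun _ ⟨_, _, hV, hL⟩ =>
    (hV.actions_nonempty _ hL).mono (hV.subset_goodActions hL)
  B1p_mem L _ c hc := by
    obtain ⟨-, 𝒲, 𝔄, hV, hL, hc⟩ := Finset.mem_filter.1 hc
    exact ⟨𝒲, 𝔄, hV, hV.B1p_mem L hL c hc⟩
  not_surelySafe := by
    rintro L ⟨𝒲, 𝔄, hV, hL⟩ k hk 𝔖 hs
    refine hV.not_surelySafe L hL k hk 𝔖 (hs.of_support_subset fun n h hpos i hi => ?_)
    have hb := hV.B1pseq_mem hL h hpos
    exact uniformD_pos_of_mem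
      (hV.subset_goodActions hb (mem_of_uniformD_pos (hV.actions_nonempty _ hb) hi))

end ValidFamilies

section Soundness

open Filter

variable (G : Game K I J C D)

lemma continuous_playProb_patStrat [Nonempty J] [TopologicalSpace (Finset J)]
    [DiscreteTopology (Finset J)] (δ : FDist K) (σ : Strategy1 I C) {n : ℕ} (h : Hist K C D n) :
    Continuous fun 𝔖 : List D → Finset J => G.playProb δ σ (patStrat 𝔖) n h := by
  induction n with
  | zero => exact continuous_const
  | succ n ih =>
    simp only [playProb]
    refine (ih h.init).mul (continuous_finsetSum _ fun i _ => continuous_finsetSum _ fun j _ =>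
      (continuous_const.mul ?_).mul continuous_const)
    exact (continuous_of_discreteTopology (f := fun s : Finset J => (uniformD s).f j)).comp
      (continuous_apply h.init.sig2)

/-- König's lemma. The space of patterns is compact, and the patterns beaten by a given horizon
form an open set, since a play only queries finitely many values of the pattern. -/
lemma eventually_forall_patStrat_visits [Nonempty J] (δ : FDist K) (σ : Strategy1 I C)
    (hno : ∀ 𝔖 : List D → Finset J, ¬ G.SurelySafe δ σ (patStrat 𝔖)) :
    ∀ᶠ N in atTop, ∀ 𝔖 : List D → Finset J, ∃ n ≤ N, ∃ h : Hist K C D n,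
      0 < G.playProb δ σ (patStrat 𝔖) n h ∧ h.visits G.T := by
  let : TopologicalSpace (Finset J) := ⊥
  have : DiscreteTopology (Finset J) := ⟨rfl⟩
  let U : ℕ → Set (List D → Finset J) := fun N => ⋃ n ∈ Set.Iic N, ⋃ h : Hist K C D n,
    {𝔖 | 0 < G.playProb δ σ (patStrat 𝔖) n h ∧ h.visits G.T}
  have hU : ∀ N, IsOpen (U N) := fun N =>
    isOpen_biUnion fun n _ => isOpen_iUnion fun h =>
      (isOpen_lt continuous_const (G.continuous_playProb_patStrat δ σ h)).and isOpen_const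
  have hmem : ∀ N 𝔖, 𝔖 ∈ U N ↔ ∃ n ≤ N, ∃ h : Hist K C D n,
      0 < G.playProb δ σ (patStrat 𝔖) n h ∧ h.visits G.T := by
    simp [U]
  have hcover : Set.univ ⊆ ⋃ N, U N := fun 𝔖 _ => by
    obtain ⟨n, h, hpos, hv⟩ : ∃ n, ∃ h : Hist K C D n,
        0 < G.playProb δ σ (patStrat 𝔖) n h ∧ h.visits G.T := by
      simpa [SurelySafe] using hno 𝔖
    exact Set.mem_iUnion.2 ⟨n, (hmem n 𝔖).2 ⟨n, le_rfl, h, hpos, hv⟩⟩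
  have hmono : Monotone U := fun N N' hN 𝔖 h𝔖 => by
    obtain ⟨n, hn, h⟩ := (hmem N 𝔖).1 h𝔖
    exact (hmem N' 𝔖).2 ⟨n, hn.trans hN, h⟩
  obtain ⟨N, hN⟩ := isCompact_univ.elim_directed_cover U hU hcover hmono.directed_le
  filter_upwards [eventually_ge_atTop N] with N' hN' 𝔖
  exact (hmem N' 𝔖).1 (hmono hN' (hN (Set.mem_univ 𝔖)))

lemma eventually_forall_goodBeliefs_visits [Nonempty I] [Nonempty J] :
    ∀ᶠ N in atTop, ∀ L ∈ G.goodBeliefs, ∀ k ∈ L, ∀ 𝔖 : List D → Finset J, ∃ n ≤ N,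
      ∃ h : Hist K C D n,
        0 < G.playProb (dirac k) (G.beliefStrat G.goodActions L) (patStrat 𝔖) n h ∧
          h.visits G.T := by
  refine eventually_all.2 fun L => eventually_imp_distrib_left.2 fun hL =>
    eventually_all.2 fun k => eventually_imp_distrib_left.2 fun hk => ?_
  exact G.eventually_forall_patStrat_visits _ _
    (G.isValidFamily_goodBeliefs.not_surelySafe L hL k hk)

lemma pow_mul_le_playProb {δ : FDist K} {σ : Strategy1 I C} {τ τ' : Strategy2 J D}
    {a b ρ : ℝ} (ha : 0 ≤ a) (hb : 0 ≤ b) (hρ : 0 ≤ ρ)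
    (hσ : ∀ cs i, 0 < (σ cs).f i → a ≤ (σ cs).f i)
    (hτ : ∀ ds j, 0 < (τ' ds).f j → b ≤ (τ ds).f j)
    (hp : ∀ k i j x, 0 < G.p k i j x → ρ ≤ G.p k i j x)
    {n : ℕ} (h : Hist K C D n) (hpos : 0 < G.playProb δ σ τ' n h) :
    δ.f h.first * (a * b * ρ) ^ n ≤ G.playProb δ σ τ n h := by
  induction n, h using Hist.extend_induction with
  | zero k => simp [playProb_zero]
  | extend n h x ih =>
    obtain ⟨hpos, hσ', hτ', hp'⟩ := (G.playProb_extend_pos_iff δ σ τ' h x).1 hpos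
    rw [Hist.extend_first, playProb_extend, pow_succ, ← mul_assoc]
    exact mul_le_mul (ih hpos) (mul_le_mul (mul_le_mul (hσ _ _ hσ') (hτ _ _ hτ') hb
      ((σ _).nonneg _)) (hp _ _ _ _ hp') hρ (mul_nonneg ((σ _).nonneg _) ((τ _).nonneg _)))
      (by positivity) (G.playProb_nonneg _ _ _ _)

/-- Against `τ`, use the pattern of the actions that `τ` plays with probability at least
`1 / card J`. -/
lemma avoidProb_le_of_forall_patStrat_visits [Nonempty J] {σ : Strategy1 I C} {k : K} {N : ℕ}
    {ρ : ℝ} (hρ : 0 ≤ ρ) (hp : ∀ k i j x, 0 < G.p k i j x → ρ ≤ G.p k i j x)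
    (hb1 : (Fintype.card I : ℝ)⁻¹ * (Fintype.card J : ℝ)⁻¹ * ρ ≤ 1)
    (hσ : ∀ cs i, 0 < (σ cs).f i → (Fintype.card I : ℝ)⁻¹ ≤ (σ cs).f i)
    (hN : ∀ 𝔖 : List D → Finset J, ∃ n ≤ N, ∃ h : Hist K C D n,
      0 < G.playProb (dirac k) σ (patStrat 𝔖) n h ∧ h.visits G.T)
    (τ : Strategy2 J D) :
    G.avoidProb (dirac k) σ τ N
      ≤ 1 - ((Fintype.card I : ℝ)⁻¹ * (Fintype.card J : ℝ)⁻¹ * ρ) ^ N := by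
  obtain ⟨n, hn, h, hpos, hv⟩ := hN (threshPat τ)
  set b := (Fintype.card I : ℝ)⁻¹ * (Fintype.card J : ℝ)⁻¹ * ρ
  have hfirst : h.first = k := by
    by_contra hk
    rw [G.playProb_dirac_of_first_ne _ _ h hk] at hpos
    exact hpos.false
  have hlow : b ^ n ≤ G.playProb (dirac k) σ τ n h := by
    simpa [hfirst] using G.pow_mul_le_playProb (by positivity) (by positivity) hρ hσ
      (fun ds j hj => inv_card_le_of_patStrat_threshPat_pos hj) hp h hpos
  have hreach : G.playProb (dirac k) σ τ n h ≤ G.reachProb (dirac k) σ τ n := by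
    refine le_of_eq_of_le (if_pos hv).symm (Finset.single_le_sum (f := fun h' : Hist K C D n =>
      if h'.visits G.T then G.playProb (dirac k) σ τ n h' else 0) (fun h' _ => ?_)
      (Finset.mem_univ h))
    split_ifs
    exacts [G.playProb_nonneg _ _ _ _, le_rfl]
  linarith [G.avoidProb_antitone (dirac k) σ τ hn, G.reachProb_add_avoidProb (dirac k) σ τ n,
    pow_le_pow_of_le_one (by positivity) hb1 hn]

lemma almostSureWin1_of_support_mem_goodBeliefs [Nonempty I] [Nonempty J] {δ : FDist K}
    (hδ : δ.support ∈ G.goodBeliefs) : G.AlmostSureWin1 δ := by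
  obtain ⟨ρ, hρ, hρ1, hp⟩ := exists_pos_le_of_pos
    fun q : K × I × J × (C × D × K) => G.p q.1 q.2.1 q.2.2.1 q.2.2.2
  obtain ⟨N, hN⟩ := G.eventually_forall_goodBeliefs_visits.exists
  set b := (Fintype.card I : ℝ)⁻¹ * (Fintype.card J : ℝ)⁻¹ * ρ
  have hb1 : b ≤ 1 := mul_le_one₀ (mul_le_one₀ (Nat.cast_inv_le_one _) (by positivity)
    (Nat.cast_inv_le_one _)) hρ.le hρ1
  refine ⟨G.beliefStrat G.goodActions δ.support, fun τ => G.val_eq_one_of_avoidProb_add_le _ _ _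
    (pow_pos (by positivity) N) (pow_le_one₀ (by positivity) hb1) N fun n => ?_⟩
  rw [avoidProb_add, avoidProb, Finset.mul_sum]
  refine Finset.sum_le_sum fun h _ => ?_
  split_ifs with hv
  · rw [mul_zero]
  rcases (G.playProb_nonneg δ _ τ h).eq_or_lt with h0 | hpos
  · rw [← h0, zero_mul, mul_zero]
  rw [mul_comm (1 - _), G.shifted_beliefStrat]
  refine mul_le_mul_of_nonneg_left ?_ hpos.le
  exact G.avoidProb_le_of_forall_patStrat_visits hρ.le (fun k i j x => hp (k, i, j, x)) hb1
    (fun cs i hi => inv_card_le_uniformD hi)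
    (hN _ (G.isValidFamily_goodBeliefs.B1pseq_mem hδ h hpos) _
      (G.last_mem_B1pseq subset_rfl h hpos hv)) _

end Soundness

section Completeness

variable (G : Game K I J C D)

def reachableBeliefs (δ : FDist K) (σ : Strategy1 I C) : Set (Finset K) :=
  {L | ∃ cs, 0 < seqWeight σ G.act₁ cs ∧ G.B1pseq δ.support cs = L}

def playedActions (δ : FDist K) (σ : Strategy1 I C) (L : Finset K) : Finset I :=
  Finset.univ.filter fun i =>
    ∃ cs, 0 < seqWeight σ G.act₁ cs ∧ G.B1pseq δ.support cs = L ∧ 0 < (σ cs).f i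

lemma surelySafe_shifted_of_surelySafe_beliefStrat [Nonempty I] {δ : FDist K} {σ : Strategy1 I C}
    {τ : Strategy2 J D} {cs : List C} (hw : 0 < seqWeight σ G.act₁ cs) {k : K}
    (hs : G.SurelySafe (dirac k) (G.beliefStrat (G.playedActions δ σ) (G.B1pseq δ.support cs)) τ) :
    G.SurelySafe (dirac k) (shifted σ cs) τ := by
  refine hs.of_support_subset fun n h hpos i hi => uniformD_pos_of_mem ?_
  refine Finset.mem_filter.2 ⟨Finset.mem_univ i, cs ++ h.sig1, ?_, G.B1pseq_append _ _ _, hi⟩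
  rw [seqWeight_append]
  exact mul_pos hw (G.seqWeight_pos_of_playProb_pos hpos)

variable [Nonempty I] [Nonempty J]

/-- The beliefs reachable under `σ`, with the actions `σ` plays at them, are closed under belief
updates; so if `δ` is not good they cannot form a valid family, and player 2 has a surely safe
pattern at some reachable belief. -/
lemma exists_surelySafe_of_not_mem_goodBeliefs {δ : FDist K}
    (hδ : δ.support ∉ G.goodBeliefs) (σ : Strategy1 I C) :
    ∃ cs, 0 < seqWeight σ G.act₁ cs ∧ ∃ k ∈ G.B1pseq δ.support cs, ∃ 𝔖 : List D → Finset J,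
      G.SurelySafe (dirac k) (G.beliefStrat (G.playedActions δ σ) (G.B1pseq δ.support cs))
        (patStrat 𝔖) := by
  by_contra! hno
  refine hδ ⟨G.reachableBeliefs δ σ, G.playedActions δ σ, ⟨?_, ?_, ?_⟩, [], by simp, rfl⟩
  · rintro L ⟨cs, hw, rfl⟩
    obtain ⟨i, hi⟩ := (σ cs).exists_pos
    exact ⟨i, Finset.mem_filter.2 ⟨Finset.mem_univ i, cs, hw, rfl, hi⟩⟩
  · intro L _ c hc
    obtain ⟨-, cs, hw, rfl, hi⟩ := Finset.mem_filter.1 hc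
    exact ⟨cs ++ [c], by rw [seqWeight_snoc]; exact mul_pos hw hi, G.B1pseq_snoc _ _ _⟩
  · rintro L ⟨cs, hw, rfl⟩ k hk 𝔖
    exact hno cs hw k hk 𝔖

def safePatFor (𝔄 : Finset K → Finset I) (L : Finset K) (k : K) : List D → Finset J :=
  if h : ∃ 𝔖 : List D → Finset J, G.SurelySafe (dirac k) (G.beliefStrat 𝔄 L) (patStrat 𝔖)
  then h.choose else fun _ => Finset.univ

lemma surelySafe_safePatFor {𝔄 : Finset K → Finset I} {L : Finset K} {k : K}
    (h : ∃ 𝔖 : List D → Finset J, G.SurelySafe (dirac k) (G.beliefStrat 𝔄 L) (patStrat 𝔖)) :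
    G.SurelySafe (dirac k) (G.beliefStrat 𝔄 L) (patStrat (G.safePatFor 𝔄 L k)) := by
  rw [safePatFor, dif_pos h]
  exact h.choose_spec

/-- Player 2 guesses a time `q.1` and a situation `q.2`: he plays every action until time
`q.1`, then follows a surely safe pattern for that situation, if there is one. -/
def guessPat (q : ℕ × (Finset K → Finset I) × Finset K × K) (ds : List D) : Finset J :=
  if ds.length < q.1 then Finset.univ else G.safePatFor q.2.1 q.2.2.1 q.2.2.2 (ds.drop q.1)

lemma exists_guessPat_le_avoidProb {δ : FDist K} (hδ : δ.support ∉ G.goodBeliefs)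
    (σ : Strategy1 I C) : ∃ q, ∃ c > 0, ∀ n, c ≤ G.avoidProb δ σ (patStrat (G.guessPat q)) n := by
  obtain ⟨cs, hw, k, hk, 𝔖, hs⟩ := G.exists_surelySafe_of_not_mem_goodBeliefs hδ σ
  have hs' := G.surelySafe_safePatFor ⟨𝔖, hs⟩
  set q := (cs.length, G.playedActions δ σ, G.B1pseq δ.support cs, k)
  obtain ⟨n₀, h₀, hv, hsig, hlast, hpos⟩ := G.exists_play_of_mem_B1pseq
    (τ := patStrat (G.guessPat q))
    (fun ds j hds => uniformD_pos_of_mem (by simp [guessPat, q, hds])) hw hk hs'.notMem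
  refine ⟨q, _, hpos, G.le_avoidProb_of_surelySafe h₀ hv ?_⟩
  have hlen : h₀.sig2.length = cs.length := by rw [← hsig, Hist.sig1_length, Hist.sig2_length]
  have hshift : shifted (patStrat (G.guessPat q)) h₀.sig2
      = patStrat (G.safePatFor (G.playedActions δ σ) (G.B1pseq δ.support cs) k) :=
    funext fun ds => by
      simp only [shifted, patStrat, guessPat, q, List.length_append, hlen]
      rw [if_neg (by omega), List.drop_left' hlen]
  rw [hshift, hsig, hlast]
  exact G.surelySafe_shifted_of_surelySafe_beliefStrat hw hs'

lemma positiveWin2_of_not_mem_goodBeliefs {δ : FDist K}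
    (hδ : δ.support ∉ G.goodBeliefs) : G.PositiveWin2 δ := by
  have : Nonempty K := let ⟨k, _⟩ := δ.exists_pos; ⟨k⟩
  obtain ⟨e⟩ := nonempty_equiv_of_countable (α := ℕ × (Finset K → Finset I) × Finset K × K)
    (β := ℕ)
  refine ⟨behavioralMix e (fun q => patStrat (G.guessPat q)) G.act₂, fun σ => ?_⟩
  obtain ⟨q, c, hc, hle⟩ := G.exists_guessPat_le_avoidProb hδ σ
  exact G.val_lt_one_of_le_avoidProb _ _ _ (mul_pos (geomWeight_pos e q) hc) fun n =>
    (mul_le_mul_of_nonneg_left (hle n) (geomWeight_pos e q).le).trans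
      (G.geomWeight_mul_avoidProb_le δ σ e (fun q => patStrat (G.guessPat q)) q n)

end Completeness

end Game

end

/-- every initial distribution is almost-surely winning for player 1
or positively winning for player 2, and not both. -/
theorem almostsure1_or_positive2 (G : Game K I J C D) (δ : FDist K) :
    (G.AlmostSureWin1 δ ∨ G.PositiveWin2 δ) ∧ ¬(G.AlmostSureWin1 δ ∧ G.PositiveWin2 δ) := by
  refine ⟨?_, fun ⟨⟨σ, hσ⟩, ⟨τ, hτ⟩⟩ => (hτ σ).ne (hσ τ)⟩
  by_cases hδ : δ.support ∈ G.goodBeliefs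
  · exact Or.inl (G.almostSureWin1_of_support_mem_goodBeliefs hδ)
  · exact Or.inr (G.positiveWin2_of_not_mem_goodBeliefs hδ)
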